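/- arXiv:2605.05905 — 3 statements merged into one kernel-verified Lean document; each statement's English description precedes it below -/
import Mathlib

section
/- Let A be a symmetric positive definite d×d matrix with smallest eigenvalue at least α > 0, and let E be a symmetric d×d matrix with rank at most r ≤ d and operator norm (largest absolute eigenvalue) at most L. Then det(A+E)/det(A) ≤ exp(L·r/α). -/
/-!
With `C = A^{-1/2}` we have `det (A + E) / det A = det (1 + M)` for `M = C E C`, and this is
`∏ᵢ (1 + λᵢ(M))`. Conjugating `-(L/α) A ≤ -L ≤ E ≤ L ≤ (L/α) A` by `C` gives `|λᵢ(M)| ≤ L/α`, and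
`M` has the rank of `E`, so at most `r` eigenvalues are nonzero; each factor satisfies
`|1 + λᵢ| ≤ exp |λᵢ|`, whence the product is at most `exp (L r / α)`.
-/

open Matrix Finset
open scoped MatrixOrder ComplexOrder

lemma Real.prod_one_add_le_exp {ι : Type*} [Fintype ι] (x : ι → ℝ) {c : ℝ} {r : ℕ}
    (hc : 0 ≤ c) (hx : ∀ i, |x i| ≤ c) (hr : Fintype.card {i // x i ≠ 0} ≤ r) :
    ∏ i, (1 + x i) ≤ Real.exp (c * r) := by
  classical
  have hsum : ∑ i, |x i| ≤ c * r := calc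
    ∑ i, |x i| = ∑ i with x i ≠ 0, |x i| := by
      simp only [← abs_ne_zero (a := x _), sum_filter_ne_zero]
    _ ≤ #{i | x i ≠ 0} • c := sum_le_card_nsmul _ _ _ fun i _ ↦ hx i
    _ ≤ c * r := by
      rw [nsmul_eq_mul, mul_comm, ← Fintype.card_subtype]
      exact mul_le_mul_of_nonneg_left (by exact_mod_cast hr) hc
  calc ∏ i, (1 + x i) ≤ ∏ i, |1 + x i| := (le_abs_self _).trans (abs_prod _ _).le
    _ ≤ ∏ i, Real.exp |x i| := by
      refine prod_le_prod (fun i _ ↦ abs_nonneg _) fun i _ ↦ (abs_add_le _ _).trans ?_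
      simpa [add_comm] using Real.add_one_le_exp |x i|
    _ = Real.exp (∑ i, |x i|) := (Real.exp_sum _ _).symm
    _ ≤ Real.exp (c * r) := Real.exp_le_exp.2 hsum

lemma IsSelfAdjoint.conj_le_smul_one {R : Type*} [Ring R] [PartialOrder R] [StarRing R]
    [StarOrderedRing R] [Algebra ℝ R] {A C E : R} (hC : IsSelfAdjoint C) (hCAC : C * A * C = 1)
    {c : ℝ} (h : E ≤ c • A) : C * E * C ≤ c • 1 := by
  simpa [mul_smul_comm, smul_mul_assoc, hCAC] using hC.conjugate_le_conjugate h

namespace Matrix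

variable {n : Type*} [Fintype n] [DecidableEq n]

section RCLike

variable {𝕜 : Type*} [RCLike 𝕜]

lemma IsHermitian.det_cfc {M : Matrix n n 𝕜} (hM : M.IsHermitian) (f : ℝ → ℝ) :
    (cfc f M).det = ∏ i, (f (hM.eigenvalues i) : 𝕜) := by
  simp [hM.cfc_eq, IsHermitian.cfc, -Unitary.conjStarAlgAut_apply]

lemma IsHermitian.det_one_add {M : Matrix n n 𝕜} (hM : M.IsHermitian) :
    (1 + M).det = ∏ i, (1 + hM.eigenvalues i : 𝕜) := by
  have h : cfc (fun x : ℝ ↦ 1 + x) M = 1 + M := by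
    rw [cfc_const_add 1 (fun x ↦ x) M, cfc_id' ℝ M, map_one]
  rw [← h, hM.det_cfc]
  push_cast
  rfl

lemma IsHermitian.abs_eigenvalues_le {M : Matrix n n 𝕜} (hM : M.IsHermitian) {c : ℝ}
    (hlo : -(c • 1) ≤ M) (hhi : M ≤ c • 1) (i : n) : |hM.eigenvalues i| ≤ c := by
  have hspec := hM.eigenvalues_mem_spectrum_real i
  rw [← neg_smul, ← Algebra.algebraMap_eq_smul_one] at hlo
  rw [← Algebra.algebraMap_eq_smul_one] at hhi
  exact abs_le.2 ⟨(algebraMap_le_iff_le_spectrum hM.isSelfAdjoint).1 hlo _ hspec,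
    (le_algebraMap_iff_spectrum_le hM.isSelfAdjoint).1 hhi _ hspec⟩

lemma PosDef.exists_isSelfAdjoint_conj_eq_one {A : Matrix n n 𝕜} (hA : A.PosDef) :
    ∃ C : Matrix n n 𝕜, IsSelfAdjoint C ∧ C * A * C = 1 := by
  set B := CFC.sqrt A
  have hBB : B * B = A := CFC.sqrt_mul_sqrt_self A hA.posSemidef.nonneg
  have hB : IsUnit B.det := by
    refine isUnit_iff_ne_zero.2 (left_ne_zero_of_mul (b := B.det) ?_)
    rw [← det_mul, hBB]
    exact hA.det_pos.ne'
  refine ⟨B⁻¹, ?_, ?_⟩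
  · rw [IsSelfAdjoint, star_eq_conjTranspose, conjTranspose_nonsing_inv,
      (CFC.sqrt_nonneg A).posSemidef.isHermitian.eq]
  · rw [← hBB, ← mul_assoc, nonsing_inv_mul _ hB, one_mul, mul_nonsing_inv _ hB]

end RCLike

variable {R : Type*} [CommRing R] {A C : Matrix n n R}

lemma isUnit_det_of_mul_mul_eq_one (hCAC : C * A * C = 1) : IsUnit C.det :=
  .of_mul_eq_one (A.det * C.det) <| by rw [← mul_assoc, ← det_mul, ← det_mul, hCAC, det_one]

lemma rank_conj_of_isUnit_det (hC : IsUnit C.det) (E : Matrix n n R) :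
    (C * E * C).rank = E.rank := by
  rw [rank_mul_eq_left_of_isUnit_det _ _ hC, rank_mul_eq_right_of_isUnit_det _ _ hC]

lemma det_add_eq_det_mul_det_one_add_conj (hCAC : C * A * C = 1) (E : Matrix n n R) :
    (A + E).det = A.det * (1 + C * E * C).det := by
  have hconj : C * (A + E) * C = 1 + C * E * C := by rw [mul_add, add_mul, hCAC]
  have hdet : C.det * A.det * C.det = 1 := by rw [← det_mul, ← det_mul, hCAC, det_one]
  rw [← hconj, det_mul, det_mul]
  linear_combination (-(A + E).det) * hdet

end Matrix

/-- Low-rank update bound. -/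
theorem stmt1 {d : ℕ} (A E : Matrix (Fin d) (Fin d) ℝ) (α L : ℝ) (r : ℕ)
    (hα : 0 < α) (hA : A.PosDef) (hAmin : (A - α • (1 : Matrix (Fin d) (Fin d) ℝ)).PosSemidef)
    (hE : E.IsSymm) (hrk : E.rank ≤ r) (hrd : r ≤ d)
    (hEub : ((L • (1 : Matrix (Fin d) (Fin d) ℝ)) - E).PosSemidef)
    (hElb : (E + L • (1 : Matrix (Fin d) (Fin d) ℝ)).PosSemidef) :
    (A + E).det / A.det ≤ Real.exp (L * r / α) := by
  obtain rfl | hd := d.eq_zero_or_pos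
  · rw [Nat.le_zero.mp hrd]
    simp
  have hEH : E.IsHermitian := isHermitian_iff_isSymm.2 hE
  have hEub' : E ≤ L • 1 := hEub
  have hElb' : -(L • 1) ≤ E := by rwa [le_iff, sub_neg_eq_add]
  have hL : 0 ≤ L := (abs_nonneg _).trans (hEH.abs_eigenvalues_le hElb' hEub' ⟨0, hd⟩)
  have hLA : L • 1 ≤ (L / α) • A := by
    have := smul_le_smul_of_nonneg_left (le_iff.2 hAmin) (div_nonneg hL hα.le)
    rwa [smul_smul, div_mul_cancel₀ _ hα.ne'] at this
  obtain ⟨C, hC, hCAC⟩ := hA.exists_isSelfAdjoint_conj_eq_one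
  have hM : (C * E * C).IsHermitian := by
    simpa only [← star_eq_conjTranspose, hC.star_eq] using isHermitian_conjTranspose_mul_mul C hEH
  have hhi : C * E * C ≤ (L / α) • 1 := hC.conj_le_smul_one hCAC (hEub'.trans hLA)
  have hlo : -((L / α) • 1) ≤ C * E * C := neg_le.1 <| by
    simpa using hC.conj_le_smul_one hCAC ((neg_le.1 hElb').trans hLA)
  rw [det_add_eq_det_mul_det_one_add_conj hCAC, mul_div_cancel_left₀ _ hA.det_pos.ne',
    hM.det_one_add, mul_div_right_comm]
  refine Real.prod_one_add_le_exp hM.eigenvalues (div_nonneg hL hα.le)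
    (hM.abs_eigenvalues_le hlo hhi) ?_
  rw [← hM.rank_eq_card_non_zero_eigs, rank_conj_of_isUnit_det
    (isUnit_det_of_mul_mul_eq_one hCAC)]
  exact hrk
end

section
/- Given vectors u ∈ ℝ^d and b ∈ ℝ^d with b ≠ 0, there exists a symmetric matrix U ∈ ℝ^{d×d} such that rank(U) ≤ 2, U·b = u, and the operator norm of U equals ‖u‖/‖b‖. -/
/-!
Write `b = ‖b‖ e` with `‖e‖ = 1` and split `u / ‖b‖ = α e + w` with `w ⟂ e`. The operator
`T = α (P_e - P_w) + e wᵀ + w eᵀ` is symmetric, has range in `span {e, w}` and sends `e` to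
`α e + w`. Expanding in the orthogonal pair `e, w` gives
`‖T x‖² = (α² + ‖w‖²) (⟪e, x⟫² + ⟪w, x⟫² / ‖w‖²)`, and Bessel's inequality bounds the second
factor by `‖x‖²`; so `‖T‖ = ‖α e + w‖`, attained at `x = e`. Rescaling by `‖b‖` gives `U`.
-/

open RealInnerProductSpace InnerProductSpace ContinuousLinearMap

variable {E : Type*} [NormedAddCommGroup E] [InnerProductSpace ℝ E]

/-- `α (P_e - P_w) + e wᵀ + w eᵀ` with `P_w = w wᵀ / ‖w‖²`; as `0⁻¹ = 0`, `P_0 = 0`. -/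
noncomputable def planeOp (α : ℝ) (e w : E) : E →L[ℝ] E :=
  α • (rankOne ℝ e e - (‖w‖ ^ 2)⁻¹ • rankOne ℝ w w) + (rankOne ℝ e w + rankOne ℝ w e)

lemma inner_div_norm_sq_mul_norm_sq (w x : E) : ⟪w, x⟫ / ‖w‖ ^ 2 * ‖w‖ ^ 2 = ⟪w, x⟫ :=
  div_mul_cancel_of_imp fun h => by simp [norm_eq_zero.mp (pow_eq_zero_iff two_ne_zero |>.mp h)]

lemma isSymmetric_rankOne_add_rankOne {𝕜 F : Type*} [RCLike 𝕜] [NormedAddCommGroup F]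
    [InnerProductSpace 𝕜 F] (x y : F) :
    (rankOne 𝕜 x y + rankOne 𝕜 y x : F →L[𝕜] F).IsSymmetric := fun z v => by
  simp only [coe_coe, add_apply, rankOne_apply, inner_add_left, inner_add_right, inner_smul_left,
    inner_smul_right, inner_conj_symm]
  ring

lemma inner_sq_add_inner_sq_div_le {e w : E} (he : ‖e‖ = 1) (hew : ⟪e, w⟫ = 0) (x : E) :
    ⟪e, x⟫ ^ 2 + ⟪w, x⟫ ^ 2 / ‖w‖ ^ 2 ≤ ‖x‖ ^ 2 := by
  set c := ⟪w, x⟫ / ‖w‖ ^ 2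
  have hc : c * ‖w‖ ^ 2 = ⟪w, x⟫ := inner_div_norm_sq_mul_norm_sq w x
  have hee : ⟪e, e⟫ = 1 := by rw [real_inner_self_eq_norm_sq, he, one_pow]
  have h := real_inner_self_nonneg (x := x - ⟪e, x⟫ • e - c • w)
  simp only [inner_sub_left, inner_sub_right, real_inner_smul_left, real_inner_smul_right,
    real_inner_comm e w, real_inner_comm e x, real_inner_comm w x, hew, hee,
    real_inner_self_eq_norm_sq x, real_inner_self_eq_norm_sq w, hc] at h
  rw [sq ⟪w, x⟫, mul_div_assoc]
  linarith

namespace planeOp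

variable (α : ℝ) {e w : E}

lemma apply (x : E) :
    planeOp α e w x = (α * ⟪e, x⟫ + ⟪w, x⟫) • e + (⟪e, x⟫ - α * (⟪w, x⟫ / ‖w‖ ^ 2)) • w := by
  simp only [planeOp, add_apply, smul_apply, sub_apply, rankOne_apply]
  match_scalars <;> ring

lemma isSymmetric : (planeOp α e w : E →ₗ[ℝ] E).IsSymmetric := by
  rw [planeOp, toLinearMap_add]
  exact .add (.smul rfl (.sub (isSymmetric_rankOne_self e)
    (.smul rfl (isSymmetric_rankOne_self w)))) (isSymmetric_rankOne_add_rankOne e w)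

lemma range_le_span :
    LinearMap.range (planeOp α e w : E →ₗ[ℝ] E) ≤ Submodule.span ℝ {e, w} := by
  rintro _ ⟨x, rfl⟩
  rw [coe_coe, apply]
  exact add_mem (Submodule.smul_mem _ _ (Submodule.subset_span (by simp)))
    (Submodule.smul_mem _ _ (Submodule.subset_span (by simp)))

lemma rank_le_two : LinearMap.rank (planeOp α e w : E →ₗ[ℝ] E) ≤ 2 :=
  calc LinearMap.rank (planeOp α e w : E →ₗ[ℝ] E)
      ≤ Module.rank ℝ (Submodule.span ℝ ({e, w} : Set E)) :=
        Submodule.rank_mono (range_le_span α)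
    _ ≤ Cardinal.mk ({e, w} : Set E) := rank_span_le _
    _ ≤ 2 := Cardinal.mk_insert_le.trans (by simp [one_add_one_eq_two])

lemma apply_self (he : ‖e‖ = 1) (hew : ⟪e, w⟫ = 0) : planeOp α e w e = α • e + w := by
  rw [apply, real_inner_comm e w, hew, real_inner_self_eq_norm_sq, he]
  simp

lemma norm_sq_apply (he : ‖e‖ = 1) (hew : ⟪e, w⟫ = 0) (x : E) :
    ‖planeOp α e w x‖ ^ 2 = ‖α • e + w‖ ^ 2 * (⟪e, x⟫ ^ 2 + ⟪w, x⟫ ^ 2 / ‖w‖ ^ 2) := by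
  rw [apply, sq ⟪w, x⟫, mul_div_assoc]
  set c := ⟪w, x⟫ / ‖w‖ ^ 2
  have hc : c * ‖w‖ ^ 2 = ⟪w, x⟫ := inner_div_norm_sq_mul_norm_sq w x
  have hee : ⟪e, e⟫ = 1 := by rw [real_inner_self_eq_norm_sq, he, one_pow]
  rw [← hc]
  simp only [← real_inner_self_eq_norm_sq, inner_add_left, inner_add_right, real_inner_smul_left,
    real_inner_smul_right, real_inner_comm e w, hew, hee]
  ring

lemma norm_eq (he : ‖e‖ = 1) (hew : ⟪e, w⟫ = 0) : ‖planeOp α e w‖ = ‖α • e + w‖ := by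
  refine le_antisymm (opNorm_le_bound _ (norm_nonneg _) fun x => ?_) ?_
  · refine (pow_le_pow_iff_left₀ (norm_nonneg _) (by positivity) two_ne_zero).mp ?_
    rw [norm_sq_apply α he hew, mul_pow]
    gcongr
    exact inner_sq_add_inner_sq_div_le he hew x
  · simpa [apply_self α he hew, he] using le_opNorm (planeOp α e w) e

end planeOp

theorem exists_isSymmetric_rank_le_two_apply_eq_of_norm_eq_one {e : E} (he : ‖e‖ = 1) (v : E) :
    ∃ T : E →L[ℝ] E, (T : E →ₗ[ℝ] E).IsSymmetric ∧ LinearMap.rank (T : E →ₗ[ℝ] E) ≤ 2 ∧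
      T e = v ∧ ‖T‖ = ‖v‖ := by
  set α := ⟪e, v⟫
  have hv : v = α • e + (v - α • e) := (add_sub_cancel _ _).symm
  have hew : ⟪e, v - α • e⟫ = 0 := by
    rw [inner_sub_right, real_inner_smul_right, real_inner_self_eq_norm_sq, he]
    ring
  refine ⟨planeOp α e (v - α • e), planeOp.isSymmetric α, planeOp.rank_le_two α, ?_, ?_⟩
  · rw [planeOp.apply_self α he hew, ← hv]
  · rw [planeOp.norm_eq α he hew, ← hv]

/-- Existence of a symmetric rank-≤2 matrix (as an operator) sending `b` to `u`
with operator norm `‖u‖/‖b‖`. -/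
theorem stmt3 {d : ℕ} (u b : EuclideanSpace ℝ (Fin d)) (hb : b ≠ 0) :
    ∃ U : EuclideanSpace ℝ (Fin d) →L[ℝ] EuclideanSpace ℝ (Fin d),
      (∀ x y : EuclideanSpace ℝ (Fin d), ⟪U x, y⟫ = ⟪x, U y⟫) ∧
      LinearMap.rank (U : EuclideanSpace ℝ (Fin d) →ₗ[ℝ] EuclideanSpace ℝ (Fin d)) ≤ 2 ∧
      U b = u ∧ ‖U‖ = ‖u‖ / ‖b‖ := by
  have hb' : ‖b‖ ≠ 0 := norm_ne_zero_iff.mpr hb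
  have he : ‖‖b‖⁻¹ • b‖ = 1 := by rw [norm_smul, norm_inv, norm_norm, inv_mul_cancel₀ hb']
  obtain ⟨T, hT, hrank, hTe, hnorm⟩ :=
    exists_isSymmetric_rank_le_two_apply_eq_of_norm_eq_one he (‖b‖⁻¹ • u)
  refine ⟨T, hT, hrank, ?_, ?_⟩
  · rw [← smul_inv_smul₀ hb' b, map_smul, hTe, smul_inv_smul₀ hb']
  · rw [hnorm, norm_smul, norm_inv, norm_norm, inv_mul_eq_div]
end

section
/- For d×d real matrices: let θ, θ* ∈ ℝ^d with v = θ − θ* ≠ 0, and define the linear map B: S^d → ℝ^d by B(W) = W·v on symmetric matrices (with the Frobenius inner product on S^d). Then the adjoint is B^T(u) = (v·uᵀ + u·vᵀ)/2, and B∘B^T = (v·vᵀ + ‖v‖²·I)/2, with det(B∘B^T) = 2^{1−d}·‖v‖^{2d}. -/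
/-!
For symmetric `W`, both `tr (W v uᵀ)` and `tr (W u vᵀ)` equal `⟨W v, u⟩`, which gives the adjoint.
The determinant follows from the matrix determinant lemma after writing
`v vᵀ + ‖v‖² I = ‖v‖² (I + ‖v‖⁻² v vᵀ)`.
-/

open Matrix

namespace Matrix

variable {n K : Type*} [Fintype n]

theorem IsSymm.mulVec_dotProduct_comm [CommSemiring K] {W : Matrix n n K} (hW : W.IsSymm)
    (u v : n → K) : W *ᵥ u ⬝ᵥ v = W *ᵥ v ⬝ᵥ u := by
  rw [dotProduct_comm, dotProduct_mulVec, ← mulVec_transpose, hW.eq]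

theorem IsSymm.mulVec_dotProduct_eq_trace_mul_symmetrize [Field K] [NeZero (2 : K)]
    {W : Matrix n n K} (hW : W.IsSymm) (u v : n → K) :
    W *ᵥ v ⬝ᵥ u = trace (W * ((1 / 2 : K) • (vecMulVec v u + vecMulVec u v))) := by
  rw [mul_smul_comm, trace_smul, mul_add, trace_add, mul_vecMulVec, mul_vecMulVec,
    trace_vecMulVec, trace_vecMulVec, hW.mulVec_dotProduct_comm u v, smul_eq_mul]
  field_simp
  ring

theorem vecMulVec_add_vecMulVec_mulVec [CommRing K] [DecidableEq n] (u v : n → K) :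
    (vecMulVec v u + vecMulVec u v) *ᵥ v = (vecMulVec v v + (v ⬝ᵥ v) • 1) *ᵥ u := by
  simp only [add_mulVec, vecMulVec_mulVec, smul_mulVec, one_mulVec, op_smul_eq_smul,
    dotProduct_comm u v]

theorem det_smul_one_add_vecMulVec [Field K] [DecidableEq n] [Nonempty n] {c : K} (hc : c ≠ 0)
    (u w : n → K) :
    (c • (1 : Matrix n n K) + vecMulVec u w).det = c ^ (Fintype.card n - 1) * (c + w ⬝ᵥ u) := by
  have hfactor : c • (1 : Matrix n n K) + vecMulVec u w =
      c • (1 + replicateCol Unit (c⁻¹ • u) * replicateRow Unit w) := by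
    rw [← vecMulVec_eq, smul_add, smul_vecMulVec, smul_smul, mul_inv_cancel₀ hc, one_smul]
  obtain ⟨k, hk⟩ := Nat.exists_eq_add_one.mpr (Fintype.card_pos (α := n))
  rw [hfactor, det_smul, det_one_add_replicateCol_mul_replicateRow, dotProduct_smul, smul_eq_mul,
    hk, Nat.add_sub_cancel, pow_succ]
  field_simp

theorem det_vecMulVec_self_add_dotProduct_smul_one [Field K] [LinearOrder K]
    [IsStrictOrderedRing K] [DecidableEq n] {v : n → K} (hv : v ≠ 0) :
    (vecMulVec v v + (v ⬝ᵥ v) • 1).det = 2 * (v ⬝ᵥ v) ^ Fintype.card n := by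
  have hvv : v ⬝ᵥ v ≠ 0 := fun h => hv (dotProduct_self_eq_zero.mp h)
  have : Nonempty n := not_isEmpty_iff.mp fun _ => hv (Subsingleton.elim _ _)
  obtain ⟨k, hk⟩ := Nat.exists_eq_add_one.mpr (Fintype.card_pos (α := n))
  rw [add_comm, det_smul_one_add_vecMulVec hvv, hk, Nat.add_sub_cancel, pow_succ]
  ring

end Matrix

/-- Properties of the map `B : W ↦ W v` on symmetric matrices (Frobenius inner product):
its adjoint is `u ↦ (v uᵀ + u vᵀ)/2`, the composition `B ∘ Bᵀ` is the matrix
`(v vᵀ + ‖v‖² I)/2`, and `det (B ∘ Bᵀ) = 2^{1−d} ‖v‖^{2d}`. -/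
theorem stmt15 {d : ℕ} (v : Fin d → ℝ) (hv : v ≠ 0) :
    (∀ W : Matrix (Fin d) (Fin d) ℝ, W.IsSymm → ∀ u : Fin d → ℝ,
        (W.mulVec v) ⬝ᵥ u =
          Matrix.trace (W * ((1 / 2 : ℝ) • (vecMulVec v u + vecMulVec u v)))) ∧
    (∀ u : Fin d → ℝ,
        ((1 / 2 : ℝ) • (vecMulVec v u + vecMulVec u v)).mulVec v =
          ((1 / 2 : ℝ) • (vecMulVec v v + (v ⬝ᵥ v) • (1 : Matrix (Fin d) (Fin d) ℝ))).mulVec u) ∧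
    ((1 / 2 : ℝ) • (vecMulVec v v + (v ⬝ᵥ v) • (1 : Matrix (Fin d) (Fin d) ℝ))).det =
      (2 : ℝ) ^ ((1 : ℤ) - (d : ℤ)) * (v ⬝ᵥ v) ^ d := by
  refine ⟨fun W hW u => hW.mulVec_dotProduct_eq_trace_mul_symmetrize u v, fun u => ?_, ?_⟩
  · rw [smul_mulVec, smul_mulVec, vecMulVec_add_vecMulVec_mulVec]
  rw [det_smul, det_vecMulVec_self_add_dotProduct_smul_one hv, Fintype.card_fin, ← mul_assoc,
    zpow_sub₀ two_ne_zero, zpow_one, zpow_natCast, one_div, inv_pow]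
  ring
end
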